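/- Fix ξ = (ξ₁,ξ₂) ∈ 𝔻 and write |ξ|² = ξ₁²+ξ₂². (i) Suppose h₁, h₂ : closure(𝔻) → ℝ are continuous on the closed unit disk, harmonic in 𝔻, and satisfy for all (x,y) ∈ ∂𝔻: h₁(x,y) = −2(x−ξ₁)/((x−ξ₁)²+(y−ξ₂)²) and h₂(x,y) = −2(y−ξ₂)/((x−ξ₁)²+(y−ξ₂)²). Then at the point ξ: h₁(ξ) = −2ξ₁/(1−|ξ|²), h₂(ξ) = −2ξ₂/(1−|ξ|²), ∂h₁/∂x(ξ) = ∂h₂/∂y(ξ) = −2/(1−|ξ|²)², ∂h₁/∂y(ξ) = ∂h₂/∂x(ξ) = 0, ∂²h₁/∂x²(ξ) = −∂²h₁/∂y²(ξ) = −4ξ₁/(1−|ξ|²)³, and ∂²h₂/∂x²(ξ) = −∂²h₂/∂y²(ξ) = 4ξ₂/(1−|ξ|²)³. (ii) If instead the boundary values are h₁(x,y) = 2(y−ξ₂)/((x−ξ₁)²+(y−ξ₂)²) and h₂(x,y) = −2(x−ξ₁)/((x−ξ₁)²+(y−ξ₂)²) on ∂𝔻, then h₁(ξ) = 2ξ₂/(1−|ξ|²),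 h₂(ξ) = −2ξ₁/(1−|ξ|²), ∂h₁/∂x(ξ) = ∂h₂/∂y(ξ) = 0, ∂h₁/∂y(ξ) = −∂h₂/∂x(ξ) = 2/(1−|ξ|²)², ∂²h₁/∂x²(ξ) = −∂²h₁/∂y²(ξ) = −4ξ₂/(1−|ξ|²)³, and ∂²h₂/∂x²(ξ) = −∂²h₂/∂y²(ξ) = −4ξ₁/(1−|ξ|²)³. -/

import Mathlib

noncomputable section

open Metric

/-- Partial derivative in the `x` direction of a scalar function, identifying `ℝ²` with `ℂ`
via `z = x + iy`. -/
def px (f : ℂ → ℝ) (z : ℂ) : ℝ := fderiv ℝ f z 1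

/-- Partial derivative in the `y` direction. -/
def py (f : ℂ → ℝ) (z : ℂ) : ℝ := fderiv ℝ f z Complex.I

/-- `f` is harmonic on `s`: it is `C²` there and its Laplacian vanishes on `s`. -/
def HarmonicOnSet (f : ℂ → ℝ) (s : Set ℂ) : Prop :=
  ContDiffOn ℝ 2 f s ∧ ∀ z ∈ s, px (px f) z + py (py f) z = 0

/-! On the unit circle `conj z = z⁻¹`, so `conj (z - ξ)⁻¹ = z / (1 - conj ξ * z)`, a function
holomorphic near the closed disk. Each boundary datum is therefore `Re (μ z / (1 - conj ξ * z))` on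
the circle for some `μ ∈ {-2, 2i, -2i}`, and by the Poisson formula the harmonic extension is this
real part. Its partials at `ξ` come from `∂ₓ Re G = Re G'`, `∂_y Re G = Re (i G')` and
`∂ₓ² Re G = -∂_y² Re G = Re G''`. -/

open Complex ComplexConjugate InnerProductSpace Filter Topology Laplacian

theorem px_px_add_py_py_eq_laplacian {f : ℂ → ℝ} {z : ℂ} (hf : ContDiffAt ℝ 2 f z) :
    px (px f) z + py (py f) z = Δ f z := by
  have hd : DifferentiableAt ℝ (fderiv ℝ f) z :=
    (hf.fderiv_right (m := 1) (by norm_num)).differentiableAt one_ne_zero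
  have hdir : ∀ v : ℂ, fderiv ℝ (fun w => fderiv ℝ f w v) z v = fderiv ℝ (fderiv ℝ f) z v v :=
    fun v => by simp [fderiv_clm_apply hd (differentiableAt_const v)]
  rw [laplacian_eq_iteratedFDeriv_complexPlane]
  simp only [iteratedFDeriv_two_apply]
  exact congr_arg₂ (· + ·) (hdir 1) (hdir I)

theorem HarmonicOnSet.harmonicOnNhd {f : ℂ → ℝ} {s : Set ℂ} (hs : IsOpen s)
    (hf : HarmonicOnSet f s) : HarmonicOnNhd f s := fun z hz => by
  have hC : ∀ w ∈ s, ContDiffAt ℝ 2 f w := fun w hw => hf.1.contDiffAt (hs.mem_nhds hw)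
  refine ⟨hC z hz, eventually_of_mem (hs.mem_nhds hz) fun w hw => ?_⟩
  rw [Pi.zero_apply, ← px_px_add_py_py_eq_laplacian (hC w hw), hf.2 w hw]

theorem HarmonicContOnCl.eqOn_ball_of_eqOn_sphere {f g : ℂ → ℝ} {c : ℂ} {R : ℝ}
    (hf : HarmonicContOnCl f (ball c R)) (hg : HarmonicContOnCl g (ball c R))
    (hfg : Set.EqOn f g (sphere c R)) : Set.EqOn f g (ball c R) := fun w hw => by
  have hR : |R| = R := abs_of_pos (pos_of_mem_ball hw)
  rw [← hf.circleAverage_poissonKernel_smul hw, ← hg.circleAverage_poissonKernel_smul hw]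
  exact Real.circleAverage_congr_sphere fun z hz => by
    simp only [Pi.smul_apply', hfg (hR ▸ hz)]

theorem px_re_of_differentiableAt {G : ℂ → ℂ} {z : ℂ} (hG : DifferentiableAt ℂ G z) :
    px (fun w => (G w).re) z = (deriv G z).re := by
  have := (reCLM.hasFDerivAt.comp z (hG.hasDerivAt.hasFDerivAt.restrictScalars ℝ))
  rw [px, show (fun w => (G w).re) = reCLM ∘ G from rfl, this.fderiv]
  simp

theorem py_re_of_differentiableAt {G : ℂ → ℂ} {z : ℂ} (hG : DifferentiableAt ℂ G z) :
    py (fun w => (G w).re) z = (I * deriv G z).re := by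
  have := (reCLM.hasFDerivAt.comp z (hG.hasDerivAt.hasFDerivAt.restrictScalars ℝ))
  rw [py, show (fun w => (G w).re) = reCLM ∘ G from rfl, this.fderiv]
  simp

theorem Filter.EventuallyEq.px {f g : ℂ → ℝ} {z : ℂ} (h : f =ᶠ[𝓝 z] g) :
    px f =ᶠ[𝓝 z] px g :=
  (h.fderiv (𝕜 := ℝ)).mono fun w hw => by simp only [_root_.px, hw]

theorem Filter.EventuallyEq.py {f g : ℂ → ℝ} {z : ℂ} (h : f =ᶠ[𝓝 z] g) :
    py f =ᶠ[𝓝 z] py g :=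
  (h.fderiv (𝕜 := ℝ)).mono fun w hw => by simp only [_root_.py, hw]

theorem px_px_re_of_analyticAt {G : ℂ → ℂ} {z : ℂ} (hG : AnalyticAt ℂ G z) :
    px (px fun w => (G w).re) z = (deriv (deriv G) z).re := by
  have hpx : px (fun w => (G w).re) =ᶠ[𝓝 z] fun w => (deriv G w).re :=
    hG.eventually_analyticAt.mono fun w hw => px_re_of_differentiableAt hw.differentiableAt
  rw [hpx.px.eq_of_nhds, px_re_of_differentiableAt hG.deriv.differentiableAt]

theorem py_py_re_of_analyticAt {G : ℂ → ℂ} {z : ℂ} (hG : AnalyticAt ℂ G z) :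
    py (py fun w => (G w).re) z = -(deriv (deriv G) z).re := by
  have hpy : py (fun w => (G w).re) =ᶠ[𝓝 z] fun w => (I * deriv G w).re :=
    hG.eventually_analyticAt.mono fun w hw => py_re_of_differentiableAt hw.differentiableAt
  rw [hpy.py.eq_of_nhds, py_re_of_differentiableAt (hG.deriv.differentiableAt.const_mul I),
    deriv_const_mul_field', ← mul_assoc, I_mul_I]
  simp

theorem HarmonicOnSet.eqOn_ball_re_of_eqOn_sphere {h : ℂ → ℝ} {G : ℂ → ℂ} {c : ℂ} {R : ℝ}
    (hG : AnalyticOnNhd ℂ G (closedBall c R)) (hc : ContinuousOn h (closedBall c R))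
    (hh : HarmonicOnSet h (ball c R)) (hb : ∀ z ∈ sphere c R, h z = (G z).re) :
    Set.EqOn h (fun z => (G z).re) (ball c R) := by
  refine HarmonicContOnCl.eqOn_ball_of_eqOn_sphere
    (.mk_ball (hh.harmonicOnNhd isOpen_ball) hc) (.mk_ball (fun z hz => ?_) ?_) hb
  · exact (hG z (ball_subset_closedBall hz)).harmonicAt_re
  · exact continuous_re.comp_continuousOn hG.continuousOn

theorem HarmonicOnSet.partials_eq_re_of_eqOn_sphere {h : ℂ → ℝ} {G : ℂ → ℂ} {c : ℂ} {R : ℝ}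
    (hG : AnalyticOnNhd ℂ G (closedBall c R)) (hc : ContinuousOn h (closedBall c R))
    (hh : HarmonicOnSet h (ball c R)) (hb : ∀ z ∈ sphere c R, h z = (G z).re)
    {ξ : ℂ} (hξ : ξ ∈ ball c R) :
    h ξ = (G ξ).re ∧ px h ξ = (deriv G ξ).re ∧ py h ξ = (I * deriv G ξ).re ∧
      px (px h) ξ = (deriv (deriv G) ξ).re ∧ py (py h) ξ = -(deriv (deriv G) ξ).re := by
  have heq : h =ᶠ[𝓝 ξ] fun z => (G z).re :=
    eventually_of_mem (isOpen_ball.mem_nhds hξ) (hh.eqOn_ball_re_of_eqOn_sphere hG hc hb)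
  have hGξ : AnalyticAt ℂ G ξ := hG ξ (ball_subset_closedBall hξ)
  exact ⟨heq.eq_of_nhds, heq.px.eq_of_nhds.trans (px_re_of_differentiableAt hGξ.differentiableAt),
    heq.py.eq_of_nhds.trans (py_re_of_differentiableAt hGξ.differentiableAt),
    heq.px.px.eq_of_nhds.trans (px_px_re_of_analyticAt hGξ),
    heq.py.py.eq_of_nhds.trans (py_py_re_of_analyticAt hGξ)⟩

def reflectedPole (ξ z : ℂ) : ℂ := z / (1 - conj ξ * z)

theorem one_sub_conj_mul_ne_zero {ξ z : ℂ} (hξ : ‖ξ‖ < 1) (hz : ‖z‖ ≤ 1) :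
    1 - conj ξ * z ≠ 0 := by
  have : ‖conj ξ * z‖ < 1 := by
    rw [norm_mul, RCLike.norm_conj]
    exact lt_of_le_of_lt (mul_le_of_le_one_right (norm_nonneg ξ) hz) hξ
  intro h
  rw [← sub_eq_zero.mp h, norm_one] at this
  exact lt_irrefl 1 this

theorem reflectedPole_of_norm_eq_one (ξ : ℂ) {z : ℂ} (hz : ‖z‖ = 1) :
    reflectedPole ξ z = (z - ξ) / (((z.re - ξ.re) ^ 2 + (z.im - ξ.im) ^ 2 : ℝ) : ℂ) := by
  have hzz : conj z * z = 1 := by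
    rw [mul_comm, mul_conj, normSq_eq_norm_sq, hz]; norm_num
  have hN : (((z.re - ξ.re) ^ 2 + (z.im - ξ.im) ^ 2 : ℝ) : ℂ) = (z - ξ) * (conj z - conj ξ) := by
    rw [← map_sub, mul_conj, normSq_apply]; push_cast; simp only [sub_re, ofReal_sub, sub_im]; ring
  rw [hN, reflectedPole]
  rcases eq_or_ne z ξ with rfl | hne
  · simp [hzz]
  have h1 : z - ξ ≠ 0 := sub_ne_zero.mpr hne
  have h2 : conj z - conj ξ ≠ 0 := by rw [← map_sub]; exact (map_ne_zero _).mpr h1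
  have h3 : 1 - conj ξ * z ≠ 0 := by
    rw [← hzz, ← sub_mul]; exact mul_ne_zero h2 (by rintro rfl; simp at hz)
  rw [div_eq_div_iff h3 (mul_ne_zero h1 h2)]
  linear_combination (z - ξ) * hzz

theorem hasDerivAt_reflectedPole {ξ z : ℂ} (hz : 1 - conj ξ * z ≠ 0) :
    HasDerivAt (reflectedPole ξ) (1 / (1 - conj ξ * z) ^ 2) z := by
  have hden : HasDerivAt (fun w => 1 - conj ξ * w) (-conj ξ) z := by
    simpa using ((hasDerivAt_id z).const_mul (conj ξ)).const_sub 1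
  refine ((hasDerivAt_id' z).fun_div hden hz).congr_deriv ?_
  field_simp
  ring

theorem hasDerivAt_deriv_reflectedPole {ξ z : ℂ} (hz : 1 - conj ξ * z ≠ 0) :
    HasDerivAt (fun w => 1 / (1 - conj ξ * w) ^ 2) (2 * conj ξ / (1 - conj ξ * z) ^ 3) z := by
  have hden : HasDerivAt (fun w => (1 - conj ξ * w) ^ 2) (2 * (1 - conj ξ * z) * -conj ξ) z := by
    simpa using (((hasDerivAt_id' z).const_mul (conj ξ)).const_sub 1).fun_pow 2
  refine ((hasDerivAt_const z (1 : ℂ)).fun_div hden (pow_ne_zero 2 hz)).congr_deriv ?_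
  field_simp
  ring

theorem analyticOnNhd_reflectedPole {ξ : ℂ} (hξ : ‖ξ‖ < 1) :
    AnalyticOnNhd ℂ (reflectedPole ξ) (closedBall 0 1) := fun z hz => by
  have := one_sub_conj_mul_ne_zero hξ (mem_closedBall_zero_iff.mp hz)
  unfold reflectedPole
  fun_prop (disch := exact this)

theorem deriv_deriv_reflectedPole {ξ z : ℂ} (hz : 1 - conj ξ * z ≠ 0) :
    deriv (deriv (reflectedPole ξ)) z = 2 * conj ξ / (1 - conj ξ * z) ^ 3 := by
  have hnear : ∀ᶠ w in 𝓝 z, 1 - conj ξ * w ≠ 0 := by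
    refine ContinuousAt.eventually_ne ?_ hz
    fun_prop
  have : deriv (reflectedPole ξ) =ᶠ[𝓝 z] fun w => 1 / (1 - conj ξ * w) ^ 2 :=
    hnear.mono fun w hw => (hasDerivAt_reflectedPole hw).deriv
  rw [this.deriv_eq, (hasDerivAt_deriv_reflectedPole hz).deriv]

theorem one_sub_conj_mul_self (ξ : ℂ) :
    1 - conj ξ * ξ = ((1 - (ξ.re ^ 2 + ξ.im ^ 2) : ℝ) : ℂ) := by
  rw [mul_comm, mul_conj, normSq_apply]; push_cast; ring

theorem HarmonicOnSet.partials_of_eqOn_sphere_re_mul_sub_div {ξ : ℂ} (hξ : ξ ∈ ball (0 : ℂ) 1)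
    (μ : ℂ) {h : ℂ → ℝ} (hc : ContinuousOn h (closedBall 0 1)) (hh : HarmonicOnSet h (ball 0 1))
    (hb : ∀ z ∈ sphere (0 : ℂ) 1,
      h z = (μ * (z - ξ)).re / ((z.re - ξ.re) ^ 2 + (z.im - ξ.im) ^ 2)) :
    h ξ = (μ * ξ).re / (1 - (ξ.re ^ 2 + ξ.im ^ 2)) ∧
      px h ξ = μ.re / (1 - (ξ.re ^ 2 + ξ.im ^ 2)) ^ 2 ∧
      py h ξ = -(μ.im / (1 - (ξ.re ^ 2 + ξ.im ^ 2)) ^ 2) ∧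
      px (px h) ξ = (μ * 2 * conj ξ).re / (1 - (ξ.re ^ 2 + ξ.im ^ 2)) ^ 3 ∧
      py (py h) ξ = -((μ * 2 * conj ξ).re / (1 - (ξ.re ^ 2 + ξ.im ^ 2)) ^ 3) := by
  have hξ' : ‖ξ‖ < 1 := mem_ball_zero_iff.mp hξ
  have hG : AnalyticOnNhd ℂ (fun z => μ * reflectedPole ξ z) (closedBall 0 1) :=
    fun z hz => analyticAt_const.mul (analyticOnNhd_reflectedPole hξ' z hz)
  have hbG : ∀ z ∈ sphere (0 : ℂ) 1, h z = (μ * reflectedPole ξ z).re := fun z hz => by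
    rw [hb z hz, reflectedPole_of_norm_eq_one ξ (mem_sphere_zero_iff_norm.mp hz), ← mul_div_assoc,
      div_ofReal_re]
  have hD := one_sub_conj_mul_ne_zero hξ' hξ'.le
  obtain ⟨h0, h1, h2, h11, h22⟩ := hh.partials_eq_re_of_eqOn_sphere hG hc hbG hξ
  simp only [deriv_const_mul_field', deriv_deriv_reflectedPole hD,
    (hasDerivAt_reflectedPole hD).deriv] at h1 h2 h11 h22
  rw [reflectedPole] at h0
  rw [one_sub_conj_mul_self] at h0 h1 h2 h11 h22
  simp only [← mul_assoc, ← mul_div_assoc, mul_one, ← ofReal_pow, div_ofReal_re, I_mul_re,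
    neg_div] at h0 h1 h2 h11 h22
  exact ⟨h0, h1, h2, h11, h22⟩

/-- Values and low-order derivatives at `ξ` of the harmonic extensions of the two families of
boundary data `h^{(−1,1)}` (part (i)) and `h^{(−1,2)}` (part (ii)). -/
theorem robin_function_hm1 (ξ : ℂ) (hξ : ξ ∈ ball (0 : ℂ) 1) :
    (∀ h1 h2 : ℂ → ℝ,
      ContinuousOn h1 (closedBall (0 : ℂ) 1) → ContinuousOn h2 (closedBall (0 : ℂ) 1) →
      HarmonicOnSet h1 (ball (0 : ℂ) 1) → HarmonicOnSet h2 (ball (0 : ℂ) 1) →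
      (∀ z ∈ sphere (0 : ℂ) 1,
        h1 z = -(2 * (z.re - ξ.re)) / ((z.re - ξ.re) ^ 2 + (z.im - ξ.im) ^ 2)) →
      (∀ z ∈ sphere (0 : ℂ) 1,
        h2 z = -(2 * (z.im - ξ.im)) / ((z.re - ξ.re) ^ 2 + (z.im - ξ.im) ^ 2)) →
      (h1 ξ = -(2 * ξ.re) / (1 - (ξ.re ^ 2 + ξ.im ^ 2)) ∧
       h2 ξ = -(2 * ξ.im) / (1 - (ξ.re ^ 2 + ξ.im ^ 2)) ∧
       px h1 ξ = -2 / (1 - (ξ.re ^ 2 + ξ.im ^ 2)) ^ 2 ∧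
       py h2 ξ = -2 / (1 - (ξ.re ^ 2 + ξ.im ^ 2)) ^ 2 ∧
       py h1 ξ = 0 ∧ px h2 ξ = 0 ∧
       px (px h1) ξ = -(4 * ξ.re) / (1 - (ξ.re ^ 2 + ξ.im ^ 2)) ^ 3 ∧
       py (py h1) ξ = 4 * ξ.re / (1 - (ξ.re ^ 2 + ξ.im ^ 2)) ^ 3 ∧
       px (px h2) ξ = 4 * ξ.im / (1 - (ξ.re ^ 2 + ξ.im ^ 2)) ^ 3 ∧
       py (py h2) ξ = -(4 * ξ.im) / (1 - (ξ.re ^ 2 + ξ.im ^ 2)) ^ 3)) ∧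
    (∀ h1 h2 : ℂ → ℝ,
      ContinuousOn h1 (closedBall (0 : ℂ) 1) → ContinuousOn h2 (closedBall (0 : ℂ) 1) →
      HarmonicOnSet h1 (ball (0 : ℂ) 1) → HarmonicOnSet h2 (ball (0 : ℂ) 1) →
      (∀ z ∈ sphere (0 : ℂ) 1,
        h1 z = 2 * (z.im - ξ.im) / ((z.re - ξ.re) ^ 2 + (z.im - ξ.im) ^ 2)) →
      (∀ z ∈ sphere (0 : ℂ) 1,
        h2 z = -(2 * (z.re - ξ.re)) / ((z.re - ξ.re) ^ 2 + (z.im - ξ.im) ^ 2)) →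
      (h1 ξ = 2 * ξ.im / (1 - (ξ.re ^ 2 + ξ.im ^ 2)) ∧
       h2 ξ = -(2 * ξ.re) / (1 - (ξ.re ^ 2 + ξ.im ^ 2)) ∧
       px h1 ξ = 0 ∧ py h2 ξ = 0 ∧
       py h1 ξ = 2 / (1 - (ξ.re ^ 2 + ξ.im ^ 2)) ^ 2 ∧
       px h2 ξ = -2 / (1 - (ξ.re ^ 2 + ξ.im ^ 2)) ^ 2 ∧
       px (px h1) ξ = -(4 * ξ.im) / (1 - (ξ.re ^ 2 + ξ.im ^ 2)) ^ 3 ∧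
       py (py h1) ξ = 4 * ξ.im / (1 - (ξ.re ^ 2 + ξ.im ^ 2)) ^ 3 ∧
       px (px h2) ξ = -(4 * ξ.re) / (1 - (ξ.re ^ 2 + ξ.im ^ 2)) ^ 3 ∧
       py (py h2) ξ = 4 * ξ.re / (1 - (ξ.re ^ 2 + ξ.im ^ 2)) ^ 3)) := by
  refine ⟨fun h1 h2 hc1 hc2 hh1 hh2 hb1 hb2 => ?_, fun h1 h2 hc1 hc2 hh1 hh2 hb1 hb2 => ?_⟩
  · obtain ⟨v1, x1, y1, xx1, yy1⟩ := hh1.partials_of_eqOn_sphere_re_mul_sub_div hξ (-2) hc1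
      fun z hz => by rw [hb1 z hz]; simp
    obtain ⟨v2, x2, y2, xx2, yy2⟩ := hh2.partials_of_eqOn_sphere_re_mul_sub_div hξ (2 * I) hc2
      fun z hz => by rw [hb2 z hz]; simp
    rw [v1, x1, y1, xx1, yy1, v2, x2, y2, xx2, yy2]
    norm_num [neg_div]
  · obtain ⟨v1, x1, y1, xx1, yy1⟩ := hh1.partials_of_eqOn_sphere_re_mul_sub_div hξ (-2 * I) hc1
      fun z hz => by rw [hb1 z hz]; simp
    obtain ⟨v2, x2, y2, xx2, yy2⟩ := hh2.partials_of_eqOn_sphere_re_mul_sub_div hξ (-2) hc2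
      fun z hz => by rw [hb2 z hz]; simp
    rw [v1, x1, y1, xx1, yy1, v2, x2, y2, xx2, yy2]
    norm_num [neg_div]
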